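/- arXiv:2203.10947 — 2 statements merged into one kernel-verified Lean document; each statement's English description precedes it below -/
import Mathlib

section
/- Let a ≥ 1 and (q_k)_{k≥0} be a bounded sequence in a real Hilbert space H such that q_{k+1} + (k/a)(q_{k+1} - q_k) converges to l ∈ H as k → ∞. Then q_k converges to l as k → ∞. -/
/-!
Put `x k = ‖q k - l‖`, `e k = ‖v k - l‖` with `v k = q (k+1) + (k/a) • (q (k+1) - q k)`
and `t k = k / (k + a)`. Solving for `q (k+1)` shows that `q (k+1) - l` is the convex combination
`t k • (q k - l) + (1 - t k) • (v k - l)`, so `x (k+1) ≤ t k * x k + (1 - t k) * e k`.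
Since `a ≥ 1` gives `t k ≤ k / (k+1)`, once `e k ≤ ε` for all `k ≥ N` the quantity
`k * max (x k - ε) 0` is antitone from `N` on; hence `x n ≤ ε + C / n` for large `n`.
-/

open Filter Topology

lemma sub_eq_div_smul_add_one_sub_div_smul {E : Type*} [AddCommGroup E] [Module ℝ E]
    (x y l : E) {c a : ℝ} (hc : 0 ≤ c) (ha : 0 < a) :
    y - l = (c / (c + a)) • (x - l) + (1 - c / (c + a)) • (y + (c / a) • (y - x) - l) := by
  have hca : c + a ≠ 0 := by positivity
  match_scalars <;> field_simp <;> ring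

lemma norm_sub_le_div_mul_add_one_sub_div_mul {E : Type*} [SeminormedAddCommGroup E]
    [NormedSpace ℝ E] (x y l : E) {c a : ℝ} (hc : 0 ≤ c) (ha : 0 < a) :
    ‖y - l‖ ≤
      c / (c + a) * ‖x - l‖ + (1 - c / (c + a)) * ‖y + (c / a) • (y - x) - l‖ := by
  have ht : 0 ≤ c / (c + a) := by positivity
  have ht' : 0 ≤ 1 - c / (c + a) := by
    rw [sub_nonneg, div_le_one (by positivity)]; linarith
  rw [sub_eq_div_smul_add_one_sub_div_smul x y l hc ha]
  refine (norm_add_le _ _).trans_eq ?_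
  rw [norm_smul, norm_smul, Real.norm_of_nonneg ht, Real.norm_of_nonneg ht']

lemma succ_mul_max_sub_le {k x x' e t ε : ℝ} (ht : 0 ≤ t) (htk : t * (k + 1) ≤ k)
    (hk : 0 ≤ k) (hrec : x' ≤ t * x + (1 - t) * e) (he : e ≤ ε) :
    (k + 1) * max (x' - ε) 0 ≤ k * max (x - ε) 0 := by
  have ht1 : t ≤ 1 := by nlinarith
  have hx' : x' - ε ≤ t * (x - ε) := by nlinarith
  rcases le_total (x' - ε) 0 with h | h
  · rw [max_eq_right h, mul_zero]; exact mul_nonneg hk (le_max_right _ _)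
  · rw [max_eq_left h]
    calc (k + 1) * (x' - ε) ≤ (k + 1) * (t * max (x - ε) 0) := by
          gcongr; exact hx'.trans (by gcongr; exact le_max_left _ _)
      _ = t * (k + 1) * max (x - ε) 0 := by ring
      _ ≤ k * max (x - ε) 0 := by gcongr

lemma tendsto_zero_of_le_mul_add_one_sub_mul {x e t : ℕ → ℝ} (hx : ∀ k, 0 ≤ x k)
    (ht : ∀ k, 0 ≤ t k) (htk : ∀ k : ℕ, t k * (k + 1) ≤ k)
    (hrec : ∀ k, x (k + 1) ≤ t k * x k + (1 - t k) * e k)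
    (he : Tendsto e atTop (𝓝 0)) : Tendsto x atTop (𝓝 0) := by
  refine tendsto_order.2 ⟨fun b hb => Eventually.of_forall fun n => hb.trans_le (hx n),
    fun ε hε => ?_⟩
  obtain ⟨N, hN⟩ := eventually_atTop.1 (he.eventually (gt_mem_nhds (half_pos hε)))
  have hdecay : ∀ n ≥ N, (n : ℝ) * max (x n - ε / 2) 0 ≤ N * max (x N - ε / 2) 0 := by
    intro n hn
    induction n, hn using Nat.le_induction with
    | base => exact le_rfl
    | succ n hn ih =>
      refine le_trans ?_ ih
      push_cast
      exact succ_mul_max_sub_le (ht n) (htk n) n.cast_nonneg (hrec n) (hN n hn).le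
  have hC := tendsto_const_div_atTop_nhds_zero_nat ((N : ℝ) * max (x N - ε / 2) 0)
  filter_upwards [hC.eventually (gt_mem_nhds (half_pos hε)), eventually_ge_atTop N,
    eventually_gt_atTop 0] with n hsmall hNn hn
  have hbound : max (x n - ε / 2) 0 ≤ N * max (x N - ε / 2) 0 / n := by
    rw [le_div_iff₀ (by exact_mod_cast hn), mul_comm]; exact hdecay n hNn
  linarith [le_max_left (x n - ε / 2) 0]

theorem stmt_0_general
    {H : Type*} [NormedAddCommGroup H] [InnerProductSpace ℝ H]
    (a : ℝ) (ha : 1 ≤ a) (q : ℕ → H) (l : H)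
    (hconv : Tendsto (fun k : ℕ => q (k + 1) + ((k : ℝ) / a) • (q (k + 1) - q k))
      atTop (𝓝 l)) :
    Tendsto q atTop (𝓝 l) := by
  have ha0 : 0 < a := one_pos.trans_le ha
  rw [tendsto_iff_norm_sub_tendsto_zero] at hconv ⊢
  refine tendsto_zero_of_le_mul_add_one_sub_mul (t := fun k : ℕ => (k : ℝ) / (k + a))
    (fun k => norm_nonneg _) (fun k => by positivity) (fun k => ?_)
    (fun k => norm_sub_le_div_mul_add_one_sub_div_mul (q k) (q (k + 1)) l k.cast_nonneg ha0) hconv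
  rw [div_mul_eq_mul_div, div_le_iff₀ (by positivity)]
  nlinarith [k.cast_nonneg (α := ℝ)]

theorem stmt_0
    {H : Type*} [NormedAddCommGroup H] [InnerProductSpace ℝ H] [CompleteSpace H]
    (a : ℝ) (ha : 1 ≤ a) (q : ℕ → H) (l : H)
    (hbd : ∃ M : ℝ, ∀ k, ‖q k‖ ≤ M)
    (hconv : Tendsto (fun k : ℕ => q (k + 1) + ((k : ℝ) / a) • (q (k + 1) - q k))
      atTop (𝓝 l)) :
    Tendsto q atTop (𝓝 l) :=
  stmt_0_general a ha q l hconv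
end

section
/- Let a > 0 and q : [t₀, ∞) → H be continuously differentiable with q(t) + (t/a)·q'(t) → l ∈ H as t → ∞. Then q(t) → l as t → ∞. -/
/-! With `F t = t ^ a • (q t - l)` one has `F' t = a t ^ (a - 1) • (q t + (t / a) • q' t - l)`,
so `F` grows like `o(t ^ a)` by the mean value inequality, and `q t - l = t ^ (-a) • F t → 0`. -/

open Filter Topology Set Asymptotics

section

variable {E : Type*} [NormedAddCommGroup E] [NormedSpace ℝ E]

theorem norm_sub_le_mul_sub_of_hasDerivAt_smul {f h : ℝ → E} {φ φ' : ℝ → ℝ} {a b ε : ℝ}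
    (hab : a ≤ b) (hf : ∀ t ∈ Icc a b, HasDerivAt f (φ' t • h t) t)
    (hφ : ∀ t ∈ Icc a b, HasDerivAt φ (φ' t) t) (hφ' : ∀ t ∈ Ico a b, 0 ≤ φ' t)
    (hh : ∀ t ∈ Ico a b, ‖h t‖ ≤ ε) :
    ‖f b - f a‖ ≤ ε * (φ b - φ a) := by
  refine image_norm_le_of_norm_deriv_right_le_deriv_boundary' (f := fun t => f t - f a)
    (B := fun t => ε * (φ t - φ a)) (f' := fun t => φ' t • h t) (B' := fun t => ε * φ' t)
    (fun t ht => ?_) (fun t ht => ?_) (by simp)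
    (fun t ht => ?_) (fun t ht => ?_) (fun t ht => ?_) (right_mem_Icc.mpr hab)
  · exact ((hf t ht).sub_const _).continuousAt.continuousWithinAt
  · exact ((hf t (Ico_subset_Icc_self ht)).sub_const _).hasDerivWithinAt
  · exact (((hφ t ht).sub_const _).const_mul ε).continuousAt.continuousWithinAt
  · exact (((hφ t (Ico_subset_Icc_self ht)).sub_const _).const_mul ε).hasDerivWithinAt
  · rw [norm_smul, Real.norm_of_nonneg (hφ' t ht), mul_comm]
    exact mul_le_mul_of_nonneg_right (hh t ht) (hφ' t ht)

/-- A vector-valued form of l'Hôpital's rule at infinity, in the `∞ / ∞` case. -/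
theorem isLittleO_atTop_of_hasDerivAt_smul {f h : ℝ → E} {φ φ' : ℝ → ℝ}
    (hf : ∀ᶠ t in atTop, HasDerivAt f (φ' t • h t) t)
    (hφ : ∀ᶠ t in atTop, HasDerivAt φ (φ' t) t) (hφ' : ∀ᶠ t in atTop, 0 ≤ φ' t)
    (hφ_top : Tendsto φ atTop atTop) (hh : Tendsto h atTop (𝓝 0)) :
    f =o[atTop] φ := by
  refine isLittleO_iff.mpr fun c hc => ?_
  have hh' : ∀ᶠ t in atTop, ‖h t‖ ≤ c / 2 :=
    (tendsto_zero_iff_norm_tendsto_zero.mp hh).eventually (eventually_le_nhds (half_pos hc))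
  obtain ⟨t₁, ht₁⟩ := eventually_atTop.mp (((hf.and hφ).and hφ').and hh')
  have hmvt : ∀ T ≥ t₁, ‖f T - f t₁‖ ≤ c / 2 * (φ T - φ t₁) := fun T hT =>
    norm_sub_le_mul_sub_of_hasDerivAt_smul hT (fun t ht => (ht₁ t ht.1).1.1.1)
      (fun t ht => (ht₁ t ht.1).1.1.2) (fun t ht => (ht₁ t ht.1).1.2) (fun t ht => (ht₁ t ht.1).2)
  filter_upwards [eventually_ge_atTop t₁, hφ_top.eventually_ge_atTop 0,
    hφ_top.eventually_ge_atTop ((‖f t₁‖ - c / 2 * φ t₁) / (c / 2))] with T hT hφT hφT'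
  have hconst : ‖f t₁‖ - c / 2 * φ t₁ ≤ c / 2 * φ T := by
    rwa [div_le_iff₀' (half_pos hc)] at hφT'
  calc ‖f T‖ ≤ ‖f t₁‖ + ‖f T - f t₁‖ := norm_le_insert' _ _
    _ ≤ c * ‖φ T‖ := by rw [Real.norm_of_nonneg hφT]; linarith [hmvt T hT]

theorem hasDerivAt_rpow_smul_sub {q : ℝ → E} {q' : E} {a t : ℝ} (l : E) (ha : a ≠ 0)
    (ht : 0 < t) (hq : HasDerivAt q q' t) :
    HasDerivAt (fun s => s ^ a • (q s - l)) ((a * t ^ (a - 1)) • (q t + (t / a) • q' - l)) t := by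
  convert (Real.hasDerivAt_rpow_const (p := a) (Or.inl ht.ne')).smul (hq.sub_const l) using 1
  · rfl
  have hcoef : a * t ^ (a - 1) * (t / a) = t ^ a := by
    rw [mul_comm a, mul_assoc, mul_div_cancel₀ _ ha, Real.rpow_sub_one ht.ne', div_mul_cancel₀]
    exact ht.ne'
  rw [add_sub_right_comm, smul_add, smul_smul, hcoef, add_comm]

end

theorem stmt_19_general
    {H : Type*} [NormedAddCommGroup H] [InnerProductSpace ℝ H]
    (a t₀ : ℝ) (ha : 0 < a)
    (q q' : ℝ → H) (l : H)
    (hderiv : ∀ t, t₀ ≤ t → HasDerivAt q (q' t) t)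
    (hconv : Tendsto (fun t => q t + (t / a) • q' t) atTop (𝓝 l)) :
    Tendsto q atTop (𝓝 l) := by
  have hpos : ∀ᶠ t in atTop, 0 < t ∧ t₀ ≤ t := (eventually_gt_atTop 0).and (eventually_ge_atTop t₀)
  have hlittle : (fun t => t ^ a • (q t - l)) =o[atTop] fun t => t ^ a :=
    isLittleO_atTop_of_hasDerivAt_smul
      (hpos.mono fun t ht => hasDerivAt_rpow_smul_sub l ha.ne' ht.1 (hderiv t ht.2))
      (hpos.mono fun t ht => Real.hasDerivAt_rpow_const (Or.inl ht.1.ne'))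
      (hpos.mono fun t ht => mul_nonneg ha.le (Real.rpow_nonneg ht.1.le _))
      (tendsto_rpow_atTop ha) (tendsto_sub_nhds_zero_iff.mpr hconv)
  refine tendsto_sub_nhds_zero_iff.mp (hlittle.tendsto_inv_smul_nhds_zero.congr' ?_)
  filter_upwards [eventually_gt_atTop 0] with t ht
  rw [smul_smul, inv_mul_cancel₀ (Real.rpow_pos_of_pos ht a).ne', one_smul]

theorem stmt_19
    {H : Type*} [NormedAddCommGroup H] [InnerProductSpace ℝ H] [CompleteSpace H]
    (a t₀ : ℝ) (ha : 0 < a) (ht₀ : 0 < t₀)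
    (q q' : ℝ → H) (l : H)
    (hderiv : ∀ t, t₀ ≤ t → HasDerivAt q (q' t) t)
    (hconv : Tendsto (fun t => q t + (t / a) • q' t) atTop (𝓝 l)) :
    Tendsto q atTop (𝓝 l) :=
  stmt_19_general a t₀ ha q q' l hderiv hconv
end
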